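/- Let e, r : ℝ → ℝ be differentiable, β > 0, z₂(t) = (e(t), r(t)) ∈ ℝ², and let J be a constant with c_j ≤ J ≤ c_J (0 < c_j ≤ c_J). Suppose B : ℝ → ℝ satisfies B̲ₙ ≤ B(t) ≤ B̄ₙ with B̲ₙ > 0, χ : ℝ → ℝ satisfies |χ(t)| ≤ c₁ + c₂‖z₂(t)‖ with c₁, c₂ ≥ 0, and the closed-loop equations e'(t) = r(t) − β e(t) and J r'(t) = χ(t) − e(t) − B(t)(k₂ r(t) + (k₃ + k₄‖z₂(t)‖) sign(r(t))) hold with gains k₂ > 0, k₃ ≥ c₁/B̲ₙ, k₄ ≥ c₂/B̲ₙ. Then the Lyapunov function V_ϱ(t) = ½e(t)² + ½J r(t)² satisfies V_ϱ(t) ≤ V_ϱ(t₀) e^{−λ_ϱ (t − t₀)} for all t ≥ t₀, where λ_ϱ = min(β, B̲ₙ k₂)/b_ϱ and b_ϱ = max(1/2, c_J/2). -/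

import Mathlib

/-!
Along the closed loop, `V' = -β e² - B k₂ r² + r χ - B (k₃ + k₄‖z₂‖) |r|`. The gain conditions
make the switching term dominate the disturbance, so `V' ≤ -β e² - B̲ₙ k₂ r²`, and since
`V ≤ b_ϱ (e² + r²)` this is at most `-λ_ϱ V`. Hence `V(t) e^{λ_ϱ (t - t₀)}` is antitone.
-/

/-- The stacked vector `z₂ = (e, r) ∈ ℝ²` with `‖z₂‖² = e² + r²`. -/
noncomputable def stack2 (x y : ℝ) : WithLp 2 (ℝ × ℝ) :=
  (WithLp.equiv 2 _).symm (x, y)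

open Real

theorem Real.mul_sign_eq_abs (x : ℝ) : x * Real.sign x = |x| := by
  rcases lt_trichotomy x 0 with hx | rfl | hx
  · rw [Real.sign_of_neg hx, abs_of_neg hx, mul_neg_one]
  · simp
  · rw [Real.sign_of_pos hx, abs_of_pos hx, mul_one]

theorem le_mul_exp_of_hasDerivAt_le_neg_mul {V V' : ℝ → ℝ} {lam : ℝ}
    (hV : ∀ s, HasDerivAt V (V' s) s) (hdecay : ∀ s, V' s ≤ -lam * V s)
    {t₀ t : ℝ} (ht : t₀ ≤ t) : V t ≤ V t₀ * exp (-lam * (t - t₀)) := by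
  set g : ℝ → ℝ := fun s => V s * exp (lam * (s - t₀))
  have hg : ∀ s, HasDerivAt g ((V' s + lam * V s) * exp (lam * (s - t₀))) s := by
    intro s
    have hlin : HasDerivAt (fun s => lam * (s - t₀)) lam s := by
      simpa using ((hasDerivAt_id s).sub_const t₀).const_mul lam
    exact ((hV s).mul hlin.exp).congr_deriv (by ring)
  have hanti : Antitone g := by
    refine antitone_of_deriv_nonpos (fun s => (hg s).differentiableAt) fun s => ?_
    rw [(hg s).deriv]
    exact mul_nonpos_of_nonpos_of_nonneg (by linarith [hdecay s]) (exp_pos _).le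
  have hgt : g t ≤ V t₀ := by simpa [g] using hanti ht
  rw [neg_mul, exp_neg, ← div_eq_mul_inv, le_div_iff₀ (exp_pos _)]
  exact hgt

theorem mul_le_mul_mul_sign_of_abs_le {r χ c Blo B K : ℝ} (hBlo : 0 < Blo) (hχ : |χ| ≤ c)
    (hc : c ≤ Blo * K) (hB : Blo ≤ B) : r * χ ≤ B * K * (r * Real.sign r) := by
  have hK : 0 ≤ K := nonneg_of_mul_nonneg_right ((abs_nonneg χ).trans (hχ.trans hc)) hBlo
  rw [Real.mul_sign_eq_abs]
  calc r * χ ≤ |r| * |χ| := (le_abs_self _).trans (abs_mul r χ).le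
    _ ≤ |r| * (Blo * K) := by gcongr; exact hχ.trans hc
    _ ≤ B * K * |r| := by nlinarith [mul_nonneg (mul_nonneg (sub_nonneg.2 hB) hK) (abs_nonneg r)]

theorem energy_rate_le_of_closedLoop {e r ed Jrd χ β B Blo k₂ K c : ℝ} (hBlo : 0 < Blo)
    (hB : Blo ≤ B) (hk₂ : 0 ≤ k₂) (hχ : |χ| ≤ c) (hc : c ≤ Blo * K)
    (hed : ed = r - β * e) (hJrd : Jrd = χ - e - B * (k₂ * r + K * Real.sign r)) :
    e * ed + r * Jrd ≤ -(β * e ^ 2 + Blo * k₂ * r ^ 2) := by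
  have hswitch := mul_le_mul_mul_sign_of_abs_le (r := r) hBlo hχ hc hB
  have hdamp := mul_le_mul_of_nonneg_right hB (mul_nonneg hk₂ (sq_nonneg r))
  subst hed hJrd
  linarith

theorem rate_mul_half_sq_add_le {β a J c b lam e r : ℝ} (hβ : 0 ≤ β) (ha : 0 ≤ a) (hJ : J ≤ c)
    (hb : b = max (1 / 2) (c / 2)) (hlam : lam = min β a / b) :
    lam * (1 / 2 * e ^ 2 + 1 / 2 * J * r ^ 2) ≤ β * e ^ 2 + a * r ^ 2 := by
  have hb₁ : 1 / 2 ≤ b := hb ▸ le_max_left _ _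
  have hb₂ : c / 2 ≤ b := hb ▸ le_max_right _ _
  have hlam₀ : 0 ≤ lam := hlam ▸ div_nonneg (le_min hβ ha) (by linarith)
  have hlamb : lam * b = min β a := by rw [hlam]; field_simp
  have he : lam * (1 / 2) ≤ β :=
    (mul_le_mul_of_nonneg_left hb₁ hlam₀).trans (hlamb ▸ min_le_left _ _)
  have hr : lam * (J / 2) ≤ a :=
    (mul_le_mul_of_nonneg_left (by linarith) hlam₀).trans (hlamb ▸ min_le_right _ _)
  nlinarith [mul_le_mul_of_nonneg_right he (sq_nonneg e), mul_le_mul_of_nonneg_right hr (sq_nonneg r)]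

theorem stmt11_general
    (e r ed rd : ℝ → ℝ)
    (he : ∀ t, HasDerivAt e (ed t) t) (hr : ∀ t, HasDerivAt r (rd t) t)
    (β : ℝ) (hβ : 0 < β)
    (z₂ : ℝ → WithLp 2 (ℝ × ℝ))
    (J c_J : ℝ)
    (hJhigh : J ≤ c_J)
    (B : ℝ → ℝ) (Blo Bhi : ℝ) (hBlo : 0 < Blo)
    (hB : ∀ t, Blo ≤ B t ∧ B t ≤ Bhi)
    (χ : ℝ → ℝ) (c₁ c₂ : ℝ)
    (hχ : ∀ t, |χ t| ≤ c₁ + c₂ * ‖z₂ t‖)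
    (k₂ k₃ k₄ : ℝ) (hk₂ : 0 < k₂) (hk₃ : c₁ / Blo ≤ k₃) (hk₄ : c₂ / Blo ≤ k₄)
    (hloop₁ : ∀ t, ed t = r t - β * e t)
    (hloop₂ : ∀ t, J * rd t
      = χ t - e t - B t * (k₂ * r t + (k₃ + k₄ * ‖z₂ t‖) * Real.sign (r t)))
    (V : ℝ → ℝ) (hV : V = fun t => (1 / 2) * e t ^ 2 + (1 / 2) * J * r t ^ 2)
    (b_ϱ lam_ϱ : ℝ) (hb : b_ϱ = max (1 / 2) (c_J / 2)) (hlam : lam_ϱ = min β (Blo * k₂) / b_ϱ) :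
    ∀ t₀ t : ℝ, t₀ ≤ t → V t ≤ V t₀ * Real.exp (-lam_ϱ * (t - t₀)) := by
  intro t₀ t ht
  have hk₃' : c₁ ≤ Blo * k₃ := (div_le_iff₀' hBlo).1 hk₃
  have hk₄' : c₂ ≤ Blo * k₄ := (div_le_iff₀' hBlo).1 hk₄
  refine le_mul_exp_of_hasDerivAt_le_neg_mul (V' := fun s => e s * ed s + r s * (J * rd s))
    (fun s => ?_) (fun s => ?_) ht <;> subst hV
  · exact ((((he s).pow 2).const_mul _).add (((hr s).pow 2).const_mul _)).congr_deriv (by ring)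
  · have hgain : c₁ + c₂ * ‖z₂ s‖ ≤ Blo * (k₃ + k₄ * ‖z₂ s‖) := by
      nlinarith [mul_le_mul_of_nonneg_right hk₄' (norm_nonneg (z₂ s))]
    have hrate := energy_rate_le_of_closedLoop hBlo (hB s).1 hk₂.le (hχ s) hgain
      (hloop₁ s) (hloop₂ s)
    have hlyap := rate_mul_half_sq_add_le (e := e s) (r := r s) hβ.le (mul_pos hBlo hk₂).le hJhigh hb hlam
    dsimp only
    linarith

/-- the motor-layer Lyapunov function `V_ϱ = ½e² + ½Jr²` decays
exponentially: `V_ϱ(t) ≤ V_ϱ(t₀) e^{−lam_ϱ(t − t₀)}` for all `t ≥ t₀`. -/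
theorem stmt11
    (e r ed rd : ℝ → ℝ)
    (he : ∀ t, HasDerivAt e (ed t) t) (hr : ∀ t, HasDerivAt r (rd t) t)
    (β : ℝ) (hβ : 0 < β)
    (z₂ : ℝ → WithLp 2 (ℝ × ℝ)) (hz₂ : z₂ = fun t => stack2 (e t) (r t))
    (J c_j c_J : ℝ) (hc_j : 0 < c_j) (hc_jJ : c_j ≤ c_J)
    (hJlow : c_j ≤ J) (hJhigh : J ≤ c_J)
    (B : ℝ → ℝ) (Blo Bhi : ℝ) (hBlo : 0 < Blo)
    (hB : ∀ t, Blo ≤ B t ∧ B t ≤ Bhi)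
    (χ : ℝ → ℝ) (c₁ c₂ : ℝ) (hc₁ : 0 ≤ c₁) (hc₂ : 0 ≤ c₂)
    (hχ : ∀ t, |χ t| ≤ c₁ + c₂ * ‖z₂ t‖)
    (k₂ k₃ k₄ : ℝ) (hk₂ : 0 < k₂) (hk₃ : c₁ / Blo ≤ k₃) (hk₄ : c₂ / Blo ≤ k₄)
    (hloop₁ : ∀ t, ed t = r t - β * e t)
    (hloop₂ : ∀ t, J * rd t
      = χ t - e t - B t * (k₂ * r t + (k₃ + k₄ * ‖z₂ t‖) * Real.sign (r t)))
    (V : ℝ → ℝ) (hV : V = fun t => (1 / 2) * e t ^ 2 + (1 / 2) * J * r t ^ 2)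
    (b_ϱ lam_ϱ : ℝ) (hb : b_ϱ = max (1 / 2) (c_J / 2)) (hlam : lam_ϱ = min β (Blo * k₂) / b_ϱ) :
    ∀ t₀ t : ℝ, t₀ ≤ t → V t ≤ V t₀ * Real.exp (-lam_ϱ * (t - t₀)) :=
  stmt11_general e r ed rd he hr β hβ z₂ J c_J hJhigh B Blo Bhi hBlo hB χ c₁ c₂ hχ k₂ k₃ k₄ hk₂ hk₃
    hk₄ hloop₁ hloop₂ V hV b_ϱ lam_ϱ hb hlam
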